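/- Let μ ∈ (0,1) and consider the planar case n = 2, with E = (μ,0), M = (μ−1,0), and effective potential U(q) = −(1−μ)/|q−E| − μ/|q−M| − (1/2)(q₁² + q₂²) on ℝ² \ {E,M}. Then there exist real numbers x₁ ∈ (μ−1, μ), x₂ ∈ (μ, ∞) and x₃ ∈ (−∞, μ−1) such that each of the points (x₁,0), (x₂,0), (x₃,0) is a critical point of U. (These are the collinear Lagrange points L₁, L₂, L₃: L₁ lies between the moon M and the earth E, L₂ to the right of E, and L₃ to the left of M.) -/

import Mathlib

/-! On the line through the primaries the gradient of `U` is horizontal: at `(x, 0)` it is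
`(f x, 0)` with `f x = (1 - μ) φ (x - μ) + μ φ (x - μ + 1) - x`, where `φ t = t / |t|³` is the
one-dimensional inverse-square field. Each attraction term sends `f` from `-∞` to `+∞` across its
primary, while the centrifugal term `-x` sends `f` to `∓∞` at `±∞`. The intermediate value
theorem then gives a zero of `f` on each of the three intervals cut out by the primaries. -/

/-- A point of the plane `ℝ² = EuclideanSpace ℝ (Fin 2)` with given coordinates. -/
noncomputable def planePt (a b : ℝ) : EuclideanSpace ℝ (Fin 2) := WithLp.toLp 2 ![a, b]

/-- The effective potential of the planar circular restricted three body problem with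
mass ratio `μ`, where `E = (μ,0)` and `M = (μ−1,0)`:
`U(q) = −(1−μ)/|q−E| − μ/|q−M| − (1/2)(q₁² + q₂²)`. -/
noncomputable def effPotential2 (μ : ℝ) (q : EuclideanSpace ℝ (Fin 2)) : ℝ :=
  -((1 - μ) / ‖q - planePt μ 0‖) - μ / ‖q - planePt (μ - 1) 0‖
    - (1 / 2) * (q 0 ^ 2 + q 1 ^ 2)

open Filter Topology Set

noncomputable def axialField (t : ℝ) : ℝ := t / |t| ^ 3

theorem continuousAt_axialField {t : ℝ} (ht : t ≠ 0) : ContinuousAt axialField t :=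
  continuousAt_id.div (continuous_abs.continuousAt.pow 3) (by positivity)

theorem abs_axialField (t : ℝ) : |axialField t| = (|t| ^ 2)⁻¹ := by
  rcases eq_or_ne t 0 with rfl | ht
  · simp [axialField]
  · rw [axialField, abs_div, abs_pow, abs_abs]
    field_simp

theorem tendsto_axialField_nhdsGT_zero : Tendsto axialField (𝓝[>] 0) atTop := by
  refine ((tendsto_pow_atTop two_ne_zero).comp tendsto_inv_nhdsGT_zero).congr' ?_
  filter_upwards [self_mem_nhdsWithin] with t (ht : 0 < t)
  simp only [Function.comp_apply, inv_pow, axialField, abs_of_pos ht]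
  field_simp

theorem tendsto_axialField_nhdsLT_zero : Tendsto axialField (𝓝[<] 0) atBot := by
  refine (tendsto_neg_atTop_atBot.comp
    (tendsto_inv_nhdsLT_zero.atBot_mul_atBot₀ tendsto_inv_nhdsLT_zero)).congr' ?_
  filter_upwards [self_mem_nhdsWithin] with t (ht : t < 0)
  simp only [Function.comp_apply, axialField, abs_of_neg ht]
  field_simp

theorem tendsto_axialField_cocompact : Tendsto axialField (cocompact ℝ) (𝓝 0) := by
  rw [tendsto_zero_iff_abs_tendsto_zero]
  simp only [Function.comp_def, abs_axialField]
  exact tendsto_inv_atTop_zero.comp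
    ((tendsto_pow_atTop two_ne_zero).comp tendsto_norm_cocompact_atTop)

theorem tendsto_axialField_sub_nhdsGT (c : ℝ) :
    Tendsto (fun x => axialField (x - c)) (𝓝[>] c) atTop := by
  refine tendsto_axialField_nhdsGT_zero.comp (tendsto_nhdsWithin_iff.mpr ⟨?_, ?_⟩)
  · simpa using ((continuous_sub_right c).tendsto c).mono_left nhdsWithin_le_nhds
  · filter_upwards [self_mem_nhdsWithin] with x (hx : c < x)
    exact sub_pos.mpr hx

theorem tendsto_axialField_sub_nhdsLT (c : ℝ) :
    Tendsto (fun x => axialField (x - c)) (𝓝[<] c) atBot := by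
  refine tendsto_axialField_nhdsLT_zero.comp (tendsto_nhdsWithin_iff.mpr ⟨?_, ?_⟩)
  · simpa using ((continuous_sub_right c).tendsto c).mono_left nhdsWithin_le_nhds
  · filter_upwards [self_mem_nhdsWithin] with x (hx : x < c)
    exact sub_neg.mpr hx

theorem tendsto_axialField_sub_cocompact (c : ℝ) :
    Tendsto (fun x => axialField (x - c)) (cocompact ℝ) (𝓝 0) :=
  tendsto_axialField_cocompact.comp (Homeomorph.subRight c).map_cocompact.le

theorem continuousAt_axialField_sub {x c : ℝ} (h : x ≠ c) :
    ContinuousAt (fun y => axialField (y - c)) x :=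
  ContinuousAt.comp (g := axialField) (continuousAt_axialField (sub_ne_zero.mpr h))
    (continuous_sub_right c).continuousAt

noncomputable def axialForce (μ x : ℝ) : ℝ :=
  (1 - μ) * axialField (x - μ) + μ * axialField (x - (μ - 1)) - x

section axialForce

variable {μ : ℝ}

theorem continuousAt_axialForce {x : ℝ} (hE : x ≠ μ) (hM : x ≠ μ - 1) :
    ContinuousAt (axialForce μ) x :=
  (((continuousAt_axialField_sub hE).const_mul _).add
    ((continuousAt_axialField_sub hM).const_mul _)).sub continuousAt_id

theorem tendsto_const_mul_axialField_sub_add_nhdsGT {m c : ℝ} {r : ℝ → ℝ} (hm : 0 < m)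
    (hr : ContinuousAt r c) : Tendsto (fun x => m * axialField (x - c) + r x) (𝓝[>] c) atTop :=
  ((tendsto_axialField_sub_nhdsGT c).const_mul_atTop hm).atTop_add
    (hr.tendsto.mono_left nhdsWithin_le_nhds)

theorem tendsto_const_mul_axialField_sub_add_nhdsLT {m c : ℝ} {r : ℝ → ℝ} (hm : 0 < m)
    (hr : ContinuousAt r c) : Tendsto (fun x => m * axialField (x - c) + r x) (𝓝[<] c) atBot :=
  ((tendsto_axialField_sub_nhdsLT c).const_mul_atBot hm).atBot_add
    (hr.tendsto.mono_left nhdsWithin_le_nhds)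

theorem axialForce_eq_moon_add : axialForce μ =
    fun x => μ * axialField (x - (μ - 1)) + ((1 - μ) * axialField (x - μ) - x) := by
  ext x; rw [axialForce]; ring

theorem axialForce_eq_earth_add : axialForce μ =
    fun x => (1 - μ) * axialField (x - μ) + (μ * axialField (x - (μ - 1)) - x) := by
  ext x; rw [axialForce]; ring

theorem tendsto_axialForce_nhdsGT_moon (hμ : 0 < μ) :
    Tendsto (axialForce μ) (𝓝[>] (μ - 1)) atTop := by
  rw [axialForce_eq_moon_add]
  exact tendsto_const_mul_axialField_sub_add_nhdsGT hμ
    (((continuousAt_axialField_sub (sub_one_lt μ).ne).const_mul _).sub continuousAt_id)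

theorem tendsto_axialForce_nhdsLT_moon (hμ : 0 < μ) :
    Tendsto (axialForce μ) (𝓝[<] (μ - 1)) atBot := by
  rw [axialForce_eq_moon_add]
  exact tendsto_const_mul_axialField_sub_add_nhdsLT hμ
    (((continuousAt_axialField_sub (sub_one_lt μ).ne).const_mul _).sub continuousAt_id)

theorem tendsto_axialForce_nhdsGT_earth (hμ : μ < 1) :
    Tendsto (axialForce μ) (𝓝[>] μ) atTop := by
  rw [axialForce_eq_earth_add]
  exact tendsto_const_mul_axialField_sub_add_nhdsGT (sub_pos.mpr hμ)
    (((continuousAt_axialField_sub (sub_one_lt μ).ne').const_mul _).sub continuousAt_id)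

theorem tendsto_axialForce_nhdsLT_earth (hμ : μ < 1) :
    Tendsto (axialForce μ) (𝓝[<] μ) atBot := by
  rw [axialForce_eq_earth_add]
  exact tendsto_const_mul_axialField_sub_add_nhdsLT (sub_pos.mpr hμ)
    (((continuousAt_axialField_sub (sub_one_lt μ).ne').const_mul _).sub continuousAt_id)

theorem tendsto_axialForce_add_self_cocompact :
    Tendsto (fun x => axialForce μ x + x) (cocompact ℝ) (𝓝 0) := by
  simpa [axialForce] using ((tendsto_axialField_sub_cocompact μ).const_mul (1 - μ)).add
    ((tendsto_axialField_sub_cocompact (μ - 1)).const_mul μ)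

theorem tendsto_axialForce_atTop : Tendsto (axialForce μ) atTop atBot := by
  refine (((tendsto_axialForce_add_self_cocompact (μ := μ)).mono_left
    atTop_le_cocompact).add_atBot
    tendsto_neg_atTop_atBot).congr fun x => ?_
  ring

theorem tendsto_axialForce_atBot : Tendsto (axialForce μ) atBot atTop := by
  refine (((tendsto_axialForce_add_self_cocompact (μ := μ)).mono_left
    atBot_le_cocompact).add_atTop
    tendsto_neg_atBot_atTop).congr fun x => ?_
  ring

theorem exists_axialForce_eq_zero_mem_Ioo (hμ₀ : 0 < μ) (hμ₁ : μ < 1) :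
    ∃ x ∈ Ioo (μ - 1) μ, axialForce μ x = 0 :=
  isPreconnected_Ioo.intermediate_value_Iii
    (le_principal_iff.mpr (Ioo_mem_nhdsLT (by linarith)))
    (le_principal_iff.mpr (Ioo_mem_nhdsGT (by linarith)))
    (fun x hx => (continuousAt_axialForce hx.2.ne hx.1.ne').continuousWithinAt)
    (tendsto_axialForce_nhdsLT_earth hμ₁) (tendsto_axialForce_nhdsGT_moon hμ₀) (mem_univ 0)

theorem exists_axialForce_eq_zero_mem_Ioi (hμ₁ : μ < 1) :
    ∃ x ∈ Ioi μ, axialForce μ x = 0 :=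
  isPreconnected_Ioi.intermediate_value_Iii (le_principal_iff.mpr (Ioi_mem_atTop μ))
    (le_principal_iff.mpr self_mem_nhdsWithin)
    (fun x (hx : μ < x) => (continuousAt_axialForce hx.ne' (by linarith)).continuousWithinAt)
    tendsto_axialForce_atTop (tendsto_axialForce_nhdsGT_earth hμ₁) (mem_univ 0)

theorem exists_axialForce_eq_zero_mem_Iio (hμ₀ : 0 < μ) :
    ∃ x ∈ Iio (μ - 1), axialForce μ x = 0 :=
  isPreconnected_Iio.intermediate_value_Iii
    (le_principal_iff.mpr self_mem_nhdsWithin)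
    (le_principal_iff.mpr (Iio_mem_atBot (μ - 1)))
    (fun x (hx : x < μ - 1) => (continuousAt_axialForce (by linarith) hx.ne).continuousWithinAt)
    (tendsto_axialForce_nhdsLT_moon hμ₀) tendsto_axialForce_atBot (mem_univ 0)

end axialForce

theorem hasFDerivAt_inv_norm_sub {F : Type*} [NormedAddCommGroup F] [InnerProductSpace ℝ F]
    {p q : F} (h : q ≠ p) :
    HasFDerivAt (fun x => ‖x - p‖⁻¹) (-(‖q - p‖ ^ 3)⁻¹ • innerSL ℝ (q - p)) q := by
  have hpos : 0 < ‖q - p‖ := norm_pos_iff.mpr (sub_ne_zero.mpr h)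
  have hsq : HasFDerivAt (fun x => ‖x - p‖ ^ 2) (2 • innerSL ℝ (q - p)) q := by
    simpa using ((hasFDerivAt_id q).sub_const p).norm_sq
  have hnorm := hsq.sqrt (by positivity)
  simp only [Real.sqrt_sq (norm_nonneg _)] at hnorm
  refine ((hasDerivAt_inv hpos.ne').comp_hasFDerivAt q hnorm).congr_fderiv ?_
  match_scalars
  field_simp

theorem hasFDerivAt_half_norm_sq {F : Type*} [NormedAddCommGroup F] [InnerProductSpace ℝ F]
    (q : F) : HasFDerivAt (fun x => (1 / 2 : ℝ) * ‖x‖ ^ 2) (innerSL ℝ q) q := by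
  refine ((hasStrictFDerivAt_norm_sq q).hasFDerivAt.const_mul (1 / 2 : ℝ)).congr_fderiv ?_
  ext v
  simp

theorem sq_add_sq_eq_norm_sq (q : EuclideanSpace ℝ (Fin 2)) : q 0 ^ 2 + q 1 ^ 2 = ‖q‖ ^ 2 := by
  simp [EuclideanSpace.real_norm_sq_eq, Fin.sum_univ_two]

theorem planePt_sub_planePt (a b : ℝ) : planePt a 0 - planePt b 0 = planePt (a - b) 0 := by
  ext i; fin_cases i <;> simp [planePt]

theorem norm_planePt (a : ℝ) : ‖planePt a 0‖ = |a| := by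
  simp [EuclideanSpace.norm_eq, planePt, Fin.sum_univ_two, Real.sqrt_sq_eq_abs]

theorem planePt_zero : planePt 0 0 = 0 := by
  ext i; fin_cases i <;> simp [planePt]

theorem planePt_ne_planePt {a b : ℝ} (h : a ≠ b) : planePt a 0 ≠ planePt b 0 := by
  rw [← sub_ne_zero, planePt_sub_planePt, ← norm_ne_zero_iff, norm_planePt]
  exact abs_ne_zero.mpr (sub_ne_zero.mpr h)

noncomputable def gradEffPotential2 (μ : ℝ) (q : EuclideanSpace ℝ (Fin 2)) :
    EuclideanSpace ℝ (Fin 2) :=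
  ((1 - μ) / ‖q - planePt μ 0‖ ^ 3) • (q - planePt μ 0)
    + (μ / ‖q - planePt (μ - 1) 0‖ ^ 3) • (q - planePt (μ - 1) 0) - q

theorem hasFDerivAt_effPotential2 {μ : ℝ} {q : EuclideanSpace ℝ (Fin 2)}
    (hE : q ≠ planePt μ 0) (hM : q ≠ planePt (μ - 1) 0) :
    HasFDerivAt (effPotential2 μ) (innerSL ℝ (gradEffPotential2 μ q)) q := by
  have hU : effPotential2 μ = fun x => -(1 - μ) * ‖x - planePt μ 0‖⁻¹
      - μ * ‖x - planePt (μ - 1) 0‖⁻¹ - (1 / 2) * ‖x‖ ^ 2 := by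
    ext x
    simp only [effPotential2, sq_add_sq_eq_norm_sq, div_eq_mul_inv]
    ring
  rw [hU]
  refine ((((hasFDerivAt_inv_norm_sub hE).const_mul _).sub
    ((hasFDerivAt_inv_norm_sub hM).const_mul _)).sub (hasFDerivAt_half_norm_sq q)).congr_fderiv ?_
  simp only [gradEffPotential2, map_sub, map_add, map_smul, smul_smul]
  module

theorem gradEffPotential2_planePt (μ x : ℝ) :
    gradEffPotential2 μ (planePt x 0) = planePt (axialForce μ x) 0 := by
  simp only [gradEffPotential2, planePt_sub_planePt, norm_planePt]
  ext i
  fin_cases i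
  · simp only [planePt, Fin.zero_eta, PiLp.sub_apply, PiLp.add_apply, PiLp.smul_apply,
      Matrix.cons_val_zero, smul_eq_mul, axialForce, axialField]
    ring
  · simp [planePt]

theorem fderiv_effPotential2_planePt_eq_zero {μ x : ℝ} (hE : x ≠ μ) (hM : x ≠ μ - 1)
    (h : axialForce μ x = 0) : fderiv ℝ (effPotential2 μ) (planePt x 0) = 0 := by
  rw [(hasFDerivAt_effPotential2 (planePt_ne_planePt hE) (planePt_ne_planePt hM)).fderiv,
    gradEffPotential2_planePt, h, planePt_zero, map_zero]

/-- Existence of the three collinear Lagrange points `L₁, L₂, L₃`: there are critical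
points of the effective potential on the `q₁`-axis with first coordinate respectively
in `(μ−1, μ)` (between the moon and the earth), in `(μ, ∞)` (to the right of the earth)
and in `(−∞, μ−1)` (to the left of the moon). -/
theorem collinear_lagrange_points (μ : ℝ) (hμ : μ ∈ Set.Ioo (0 : ℝ) 1) :
    ∃ x₁ ∈ Set.Ioo (μ - 1) μ, ∃ x₂ ∈ Set.Ioi μ, ∃ x₃ ∈ Set.Iio (μ - 1),
      fderiv ℝ (effPotential2 μ) (planePt x₁ 0) = 0 ∧
      fderiv ℝ (effPotential2 μ) (planePt x₂ 0) = 0 ∧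
      fderiv ℝ (effPotential2 μ) (planePt x₃ 0) = 0 := by
  obtain ⟨hμ₀, hμ₁⟩ := hμ
  obtain ⟨x₁, hx₁, h₁⟩ := exists_axialForce_eq_zero_mem_Ioo hμ₀ hμ₁
  obtain ⟨x₂, hx₂ : μ < x₂, h₂⟩ := exists_axialForce_eq_zero_mem_Ioi hμ₁
  obtain ⟨x₃, hx₃ : x₃ < μ - 1, h₃⟩ := exists_axialForce_eq_zero_mem_Iio hμ₀
  exact ⟨x₁, hx₁, x₂, hx₂, x₃, hx₃,
    fderiv_effPotential2_planePt_eq_zero hx₁.2.ne hx₁.1.ne' h₁,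
    fderiv_effPotential2_planePt_eq_zero hx₂.ne' (by linarith) h₂,
    fderiv_effPotential2_planePt_eq_zero (by linarith) hx₃.ne h₃⟩
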